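/- Let R be a ring (associative with identity, not necessarily commutative). Then R is uniquely nil-clean if and only if: (1) the element 2 = 1 + 1 of R is nilpotent; and (2) R is uniquely weakly nil-clean. -/

import Mathlib

/-!
In either kind of ring every idempotent `e` is central: for any `x`, both `e + e x (1 - e)` and
`e + (1 - e) x e` are idempotents differing from `e` by a square-zero element, so uniqueness of the
decomposition of `e` forces `e x (1 - e) = (1 - e) x e = 0`. A uniquely nil-clean ring has `2`
nilpotent, because the idempotent part of `-1 = w + e` is a unit, hence `e = 1` and `w = -2`.
Once `2` is nilpotent and idempotents are central, a weak decomposition `w + e` with `-e = f`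
idempotent can be rewritten as `(w - 2f) + f`, with `w - 2f` nilpotent and `f = e ^ 2`. Thus weakly
nil-clean decompositions turn into nil-clean ones with idempotent part `e ^ 2`, and conversely.
-/

universe u v

/-- An element `e` is a very idempotent if `e` or `-e` is an idempotent. -/
def IsVeryIdempotent {R : Type u} [Ring R] (e : R) : Prop :=
  IsIdempotentElem e ∨ IsIdempotentElem (-e)

/-- `a` is uniquely weakly nil-clean: it is a sum of a nilpotent and a very idempotent,
and for any two such representations `a = w₁ + e₁ = w₂ + e₂` one has `e₁ ^ 2 = e₂ ^ 2`. -/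
def IsUniquelyWeaklyNilClean {R : Type u} [Ring R] (a : R) : Prop :=
  (∃ w e : R, IsNilpotent w ∧ IsVeryIdempotent e ∧ a = w + e) ∧
  ∀ w₁ e₁ w₂ e₂ : R, IsNilpotent w₁ → IsVeryIdempotent e₁ → IsNilpotent w₂ →
    IsVeryIdempotent e₂ → a = w₁ + e₁ → a = w₂ + e₂ → e₁ ^ 2 = e₂ ^ 2

/-- A ring is uniquely weakly nil-clean if every element is. -/
def UniquelyWeaklyNilCleanRing (R : Type u) [Ring R] : Prop :=
  ∀ a : R, IsUniquelyWeaklyNilClean a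

/-- `a` is uniquely nil-clean: it is a sum of a nilpotent and an idempotent,
and for any two such representations `a = w₁ + e₁ = w₂ + e₂` one has `e₁ = e₂`. -/
def IsUniquelyNilClean {R : Type u} [Ring R] (a : R) : Prop :=
  (∃ w e : R, IsNilpotent w ∧ IsIdempotentElem e ∧ a = w + e) ∧
  ∀ w₁ e₁ w₂ e₂ : R, IsNilpotent w₁ → IsIdempotentElem e₁ → IsNilpotent w₂ →
    IsIdempotentElem e₂ → a = w₁ + e₁ → a = w₂ + e₂ → e₁ = e₂

/-- A ring is uniquely nil-clean if every element is. -/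
def UniquelyNilCleanRing (R : Type u) [Ring R] : Prop :=
  ∀ a : R, IsUniquelyNilClean a

/-- `a` is a zero-divisor: there are nonzero `b, c` with `a * b = 0` and `c * a = 0`. -/
def IsZeroDivisorPair {R : Type u} [Ring R] (a : R) : Prop :=
  ∃ b c : R, b ≠ 0 ∧ c ≠ 0 ∧ a * b = 0 ∧ c * a = 0

/-- A ring is abelian if every idempotent is central. -/
def AbelianRing (R : Type u) [Ring R] : Prop :=
  ∀ e : R, IsIdempotentElem e → ∀ x : R, e * x = x * e

/-- A ring is periodic if every element satisfies `a ^ m = a ^ n` for distinct positive `m, n`. -/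
def PeriodicRing (R : Type u) [Ring R] : Prop :=
  ∀ a : R, ∃ m n : ℕ, 0 < m ∧ 0 < n ∧ m ≠ n ∧ a ^ m = a ^ n

/-- A Boolean ring: every element is idempotent. -/
def IsBooleanRing (R : Type u) [Ring R] : Prop :=
  ∀ a : R, IsIdempotentElem a

/-- `R / J(R)` is isomorphic to `S`, expressed via a surjective ring homomorphism
whose kernel is exactly the Jacobson radical of `R`. -/
def QuotJacobsonIsoTo (R : Type u) [Ring R] (S : Type v) [Ring S] : Prop :=
  ∃ f : R →+* S, Function.Surjective f ∧
    ∀ a : R, f a = 0 ↔ a ∈ Ideal.jacobson (⊥ : Ideal R)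

section PeirceCorner

variable {R : Type u} [Ring R] {e : R}

theorem IsIdempotentElem.mul_mul_one_sub_mul_self (he : IsIdempotentElem e) (x : R) :
    e * x * (1 - e) * (e * x * (1 - e)) = 0 := by
  calc e * x * (1 - e) * (e * x * (1 - e)) = e * x * ((1 - e) * e) * x * (1 - e) := by
        noncomm_ring
    _ = 0 := by rw [he.one_sub_mul_self, mul_zero, zero_mul, zero_mul]

theorem IsIdempotentElem.one_sub_mul_mul_mul_self (he : IsIdempotentElem e) (x : R) :
    (1 - e) * x * e * ((1 - e) * x * e) = 0 := by
  calc (1 - e) * x * e * ((1 - e) * x * e) = (1 - e) * x * (e * (1 - e)) * x * e := by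
        noncomm_ring
    _ = 0 := by rw [he.mul_one_sub_self, mul_zero, zero_mul, zero_mul]

theorem IsIdempotentElem.add_mul_mul_one_sub (he : IsIdempotentElem e) (x : R) :
    IsIdempotentElem (e + e * x * (1 - e)) := by
  have hl : e * (e * x * (1 - e)) = e * x * (1 - e) := by
    rw [← mul_assoc, ← mul_assoc, he.eq]
  have hr : e * x * (1 - e) * e = 0 := by
    rw [mul_assoc, he.one_sub_mul_self, mul_zero]
  rw [IsIdempotentElem, add_mul, mul_add, mul_add, he.eq, hl, hr,
    he.mul_mul_one_sub_mul_self, add_zero, add_zero]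

theorem IsIdempotentElem.add_one_sub_mul_mul (he : IsIdempotentElem e) (x : R) :
    IsIdempotentElem (e + (1 - e) * x * e) := by
  have hl : e * ((1 - e) * x * e) = 0 := by
    rw [← mul_assoc, ← mul_assoc, he.mul_one_sub_self, zero_mul, zero_mul]
  have hr : (1 - e) * x * e * e = (1 - e) * x * e := by
    rw [mul_assoc, he.eq]
  rw [IsIdempotentElem, add_mul, mul_add, mul_add, he.eq, hl, hr,
    he.one_sub_mul_mul_mul_self, add_zero, add_zero]

theorem IsIdempotentElem.commute_of_forall_nilClean_eq (he : IsIdempotentElem e)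
    (H : ∀ w f : R, IsNilpotent w → IsIdempotentElem f → e = w + f → f = e) (x : R) :
    Commute e x := by
  have trivial_corner : ∀ u : R, u * u = 0 → IsIdempotentElem (e + u) → u = 0 := by
    intro u hu hidem
    have := H (-u) (e + u) ⟨2, by rw [neg_sq, sq, hu]⟩ hidem (by abel)
    simpa using this
  have hl := trivial_corner _ (he.mul_mul_one_sub_mul_self x) (he.add_mul_mul_one_sub x)
  have hr := trivial_corner _ (he.one_sub_mul_mul_mul_self x) (he.add_one_sub_mul_mul x)
  rw [mul_sub, mul_one, sub_eq_zero] at hl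
  rw [sub_mul, one_mul, sub_mul, sub_eq_zero] at hr
  rw [Commute, SemiconjBy, hl, hr]

end PeirceCorner

variable {R : Type u} [Ring R]

theorem IsIdempotentElem.isVeryIdempotent {e : R} (he : IsIdempotentElem e) :
    IsVeryIdempotent e :=
  Or.inl he

theorem UniquelyNilCleanRing.abelianRing (h : UniquelyNilCleanRing R) : AbelianRing R :=
  fun e he => he.commute_of_forall_nilClean_eq fun w f hw hf hwf =>
    (h e).2 w f 0 e hw hf IsNilpotent.zero he hwf (zero_add e).symm

theorem UniquelyWeaklyNilCleanRing.abelianRing (h : UniquelyWeaklyNilCleanRing R) :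
    AbelianRing R :=
  fun e he => he.commute_of_forall_nilClean_eq fun w f hw hf hwf => by
    have := (h e).2 w f 0 e hw hf.isVeryIdempotent IsNilpotent.zero he.isVeryIdempotent hwf
      (zero_add e).symm
    rwa [hf.pow_eq two_ne_zero, he.pow_eq two_ne_zero] at this

theorem UniquelyNilCleanRing.isNilpotent_two (h : UniquelyNilCleanRing R) :
    IsNilpotent (2 : R) := by
  obtain ⟨w, e, hw, he, hwe⟩ := (h (-1)).1
  have he_unit : IsUnit e := by
    rw [show e = -(1 + w) by rw [neg_add, hwe]; abel]
    exact hw.isUnit_one_add.neg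
  have he1 : e = 1 := (IsIdempotentElem.iff_eq_one_of_isUnit he_unit).1 he
  have hw2 : w = -2 := by
    rw [he1] at hwe
    rw [show w = -1 - 1 by rw [hwe]; abel]
    norm_num
  rw [hw2] at hw
  exact isNilpotent_neg_iff.1 hw

theorem IsVeryIdempotent.exists_isNilpotent_add_sq (h2 : IsNilpotent (2 : R))
    (hR : AbelianRing R) {w e : R} (hw : IsNilpotent w) (he : IsVeryIdempotent e) :
    IsIdempotentElem (e ^ 2) ∧ ∃ w' : R, IsNilpotent w' ∧ w + e = w' + e ^ 2 := by
  rcases he with he | hf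
  · rw [he.pow_eq two_ne_zero]
    exact ⟨he, w, hw, rfl⟩
  · have hsq : e ^ 2 = -e := by rw [← neg_sq, sq, hf.eq]
    have h2e : IsNilpotent (2 * e) := (Commute.ofNat_left 2 e).isNilpotent_mul_right h2
    have hcomm : Commute w (2 * e) :=
      (Commute.ofNat_right w 2).mul_right
        (Commute.neg_right_iff.1 (hR _ hf w : Commute (-e) w).symm)
    refine ⟨hsq ▸ hf, w + 2 * e, hcomm.isNilpotent_add hw h2e, ?_⟩
    rw [hsq, two_mul]
    abel

theorem isUniquelyWeaklyNilClean_iff_isUniquelyNilClean (h2 : IsNilpotent (2 : R))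
    (hR : AbelianRing R) (a : R) : IsUniquelyWeaklyNilClean a ↔ IsUniquelyNilClean a := by
  constructor
  · rintro ⟨⟨w, e, hw, he, rfl⟩, huniq⟩
    obtain ⟨he2, w', hw', hdec⟩ := he.exists_isNilpotent_add_sq h2 hR hw
    refine ⟨⟨w', e ^ 2, hw', he2, hdec⟩, fun w₁ e₁ w₂ e₂ hw₁ he₁ hw₂ he₂ h₁ h₂ => ?_⟩
    have := huniq w₁ e₁ w₂ e₂ hw₁ he₁.isVeryIdempotent hw₂ he₂.isVeryIdempotent h₁ h₂
    rwa [he₁.pow_eq two_ne_zero, he₂.pow_eq two_ne_zero] at this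
  · rintro ⟨⟨w, e, hw, he, hdec⟩, huniq⟩
    refine ⟨⟨w, e, hw, he.isVeryIdempotent, hdec⟩, fun w₁ e₁ w₂ e₂ hw₁ he₁ hw₂ he₂ h₁ h₂ => ?_⟩
    obtain ⟨he₁', w₁', hw₁', h₁'⟩ := he₁.exists_isNilpotent_add_sq h2 hR hw₁
    obtain ⟨he₂', w₂', hw₂', h₂'⟩ := he₂.exists_isNilpotent_add_sq h2 hR hw₂
    exact huniq w₁' _ w₂' _ hw₁' he₁' hw₂' he₂' (h₁.trans h₁') (h₂.trans h₂')

theorem stmt19 (R : Type u) [Ring R] :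
    UniquelyNilCleanRing R ↔
      IsNilpotent (2 : R) ∧ UniquelyWeaklyNilCleanRing R := by
  constructor
  · intro h
    refine ⟨h.isNilpotent_two, fun a => ?_⟩
    rw [isUniquelyWeaklyNilClean_iff_isUniquelyNilClean h.isNilpotent_two h.abelianRing]
    exact h a
  · rintro ⟨h2, h⟩ a
    exact (isUniquelyWeaklyNilClean_iff_isUniquelyNilClean h2 h.abelianRing a).1 (h a)
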